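/- If f ∈ K(x)\K is such that the extension K(f) ⊆ K(x) is separable and normal, then |Γ_K(f)| = deg f. -/

import Mathlib

open Polynomial

/-- Composition of rational functions: `ratComp g h = g ∘ h = g(h)`. -/
noncomputable def ratComp {K : Type*} [Field K] (g h : RatFunc K) : RatFunc K :=
  RatFunc.eval (algebraMap K (RatFunc K)) h g

/-- Degree of a rational function `f = f_N / f_D` in lowest terms:
`max (deg f_N) (deg f_D)`. -/
noncomputable def ratDeg {K : Type*} [Field K] (f : RatFunc K) : ℕ :=
  max f.num.natDegree f.denom.natDegree

/-- The fixing group of `f`: Möbius transformations (degree-1 rational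
functions) `u` with `f ∘ u = f`. -/
noncomputable def fixGroup {K : Type*} [Field K] (f : RatFunc K) : Set (RatFunc K) :=
  {u | ratDeg u = 1 ∧ ratComp f u = f}

/-!
A `K`-automorphism `σ` of `K(x)` is determined by `u = σ x`, which generates `K(x)` and so has
degree `deg u = [K(x) : K(u)] = 1`; conversely every `u` of degree one is transcendental and
`g ↦ g ∘ u` is an automorphism. Such an automorphism fixes `K(f)` iff it fixes `f`, i.e. iff
`f ∘ u = f`, so `σ ↦ σ x` identifies `Gal(K(x)/K(f))` with `Γ_K(f)`. For a Galois extension the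
order of the Galois group is the degree `[K(x) : K(f)] = deg f`.
-/

section

open IntermediateField

variable {K : Type*} [Field K]

theorem ratDeg_eq_finrank (f : RatFunc K) : ratDeg f = Module.finrank K⟮f⟯ (RatFunc K) :=
  (RatFunc.finrank_eq_max_natDegree f).symm

theorem ratDeg_eq_one_iff {u : RatFunc K} : ratDeg u = 1 ↔ K⟮u⟯ = ⊤ := by
  rw [ratDeg_eq_finrank, finrank_eq_one_iff_eq_top]

theorem transcendental_of_ratDeg_eq_one {u : RatFunc K} (hu : ratDeg u = 1) :
    Transcendental K u :=
  RatFunc.transcendental_of_ne_C u fun ⟨c, hc⟩ => by simp [hc, ratDeg] at hu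

theorem ratComp_eq_aeval_div (g u : RatFunc K) :
    ratComp g u = aeval u g.num / aeval u g.denom := rfl

theorem RatFunc.algHom_apply {L : Type*} [Field L] [Algebra K L] (φ : RatFunc K →ₐ[K] L)
    (g : RatFunc K) :
    φ g = aeval (φ RatFunc.X) g.num / aeval (φ RatFunc.X) g.denom := by
  conv_lhs => rw [← RatFunc.num_div_denom g]
  simp only [map_div₀, ← RatFunc.aeval_X_left_eq_algebraMap, aeval_algHom_apply]

theorem RatFunc.algHom_ext {L : Type*} [Field L] [Algebra K L] {φ ψ : RatFunc K →ₐ[K] L}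
    (h : φ RatFunc.X = ψ RatFunc.X) : φ = ψ :=
  AlgHom.ext fun g => by rw [RatFunc.algHom_apply φ, RatFunc.algHom_apply ψ, h]

theorem algHom_apply_eq_ratComp (φ : RatFunc K →ₐ[K] RatFunc K) (g : RatFunc K) :
    φ g = ratComp g (φ RatFunc.X) :=
  RatFunc.algHom_apply φ g

theorem ratDeg_algEquiv_apply_X (σ : RatFunc K ≃ₐ[K] RatFunc K) : ratDeg (σ RatFunc.X) = 1 := by
  have h := adjoin_map K {RatFunc.X} (σ : RatFunc K →ₐ[K] RatFunc K)
  rw [Set.image_singleton, RatFunc.adjoin_X, ← AlgHom.fieldRange_eq_map] at h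
  exact ratDeg_eq_one_iff.mpr (h.symm.trans (AlgEquiv.fieldRange_eq_top σ))

noncomputable def substAlgEquiv (u : RatFunc K) (hu : ratDeg u = 1) :
    RatFunc K ≃ₐ[K] RatFunc K :=
  (RatFunc.algEquivOfTranscendental u (transcendental_of_ratDeg_eq_one hu)).trans
    ((equivOfEq (ratDeg_eq_one_iff.mp hu)).trans topEquiv)

theorem substAlgEquiv_apply (u : RatFunc K) (hu : ratDeg u = 1) (g : RatFunc K) :
    substAlgEquiv u hu g = ratComp g u := by
  simp [substAlgEquiv, RatFunc.algEquivOfTranscendental_apply, ratComp_eq_aeval_div]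

theorem substAlgEquiv_X (u : RatFunc K) (hu : ratDeg u = 1) :
    substAlgEquiv u hu RatFunc.X = u := by
  simp [substAlgEquiv, RatFunc.algEquivOfTranscendental_X]

theorem mem_fixingSubgroup_adjoin_simple {E : Type*} [Field E] [Algebra K E] {σ : E ≃ₐ[K] E}
    {x : E} (hx : σ x = x) : σ ∈ K⟮x⟯.fixingSubgroup := by
  have h : (σ : E →ₐ[K] E).comp K⟮x⟯.val = K⟮x⟯.val :=
    adjoin_algHom_ext K fun y hy => by simpa [Set.mem_singleton_iff.mp hy] using hx
  exact (mem_fixingSubgroup_iff _ _).mpr fun y hy => congr($h ⟨y, hy⟩)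

theorem algEquiv_apply_X_injective (E : IntermediateField K (RatFunc K)) :
    Function.Injective fun σ : RatFunc K ≃ₐ[E] RatFunc K => σ RatFunc.X := fun σ τ h =>
  AlgEquiv.ext fun g => congr($(RatFunc.algHom_ext
    (φ := (σ.restrictScalars K : RatFunc K →ₐ[K] RatFunc K))
    (ψ := (τ.restrictScalars K : RatFunc K →ₐ[K] RatFunc K)) h) g)

theorem fixGroup_eq_range (f : RatFunc K) :
    fixGroup f = Set.range fun σ : RatFunc K ≃ₐ[K⟮f⟯] RatFunc K => σ RatFunc.X := by
  ext u
  constructor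
  · rintro ⟨hu, hfu⟩
    have hσ : substAlgEquiv u hu f = f := by rw [substAlgEquiv_apply, hfu]
    exact ⟨fixingSubgroupEquiv K⟮f⟯ ⟨_, mem_fixingSubgroup_adjoin_simple hσ⟩,
      substAlgEquiv_X u hu⟩
  · rintro ⟨σ, rfl⟩
    exact ⟨ratDeg_algEquiv_apply_X (σ.restrictScalars K),
      (algHom_apply_eq_ratComp (σ.restrictScalars K : RatFunc K →ₐ[K] RatFunc K) f).symm.trans
        (σ.commutes ⟨f, mem_adjoin_simple_self K f⟩)⟩

end

/-- If `K(f) ⊆ K(x)` is separable and normal, then `|Γ_K(f)| = deg f`. -/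
theorem fixGroup_card_eq_of_normal {K : Type*} [Field K] (f : RatFunc K)
    (hf : 0 < ratDeg f)
    (hsep : Algebra.IsSeparable (IntermediateField.adjoin K {f}) (RatFunc K))
    (hnor : Normal (IntermediateField.adjoin K {f}) (RatFunc K)) :
    (fixGroup f).ncard = ratDeg f := by
  have : FiniteDimensional (IntermediateField.adjoin K {f}) (RatFunc K) :=
    Module.finite_of_finrank_pos (ratDeg_eq_finrank f ▸ hf)
  have : IsGalois (IntermediateField.adjoin K {f}) (RatFunc K) :=
    { to_isSeparable := hsep, to_normal := hnor }
  rw [fixGroup_eq_range, Set.ncard_range_of_injective (algEquiv_apply_X_injective _),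
    IsGalois.card_aut_eq_finrank, ratDeg_eq_finrank]
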